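/- For every Borel probability measure μ on the unit sphere S² of ℝ³ and every C ∈ [0,1], g(C,μ) ≤ √(C² + (1−C²)·‖Ξ(μ)‖), where ‖Ξ(μ)‖ is the largest eigenvalue of the verification matrix Ξ(μ). -/

import Mathlib

open MeasureTheory Real
open scoped ENNReal

noncomputable section

abbrev E3 := EuclideanSpace ℝ (Fin 3)

/-- The unit sphere S² in ℝ³. -/
def unitSphere : Set E3 := Metric.sphere (0 : E3) 1

/-- `g C μ` is the supremum over unit vectors `v` of `∫ √(C² + (1−C²)⟨r,v⟩²) dμ(r)`. -/
def g (C : ℝ) (μ : Measure E3) : ℝ :=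
  ⨆ v : unitSphere, ∫ r, Real.sqrt (C ^ 2 + (1 - C ^ 2) * (inner ℝ r (v : E3) : ℝ) ^ 2) ∂μ


/-- The verification matrix `Ξ(μ) = ∫ r rᵀ dμ(r)` (entrywise integral). -/
def Xi (μ : Measure E3) : Matrix (Fin 3) (Fin 3) ℝ :=
  Matrix.of fun i j => ∫ r, r i * r j ∂μ

/-!
Since `√` is concave, Jensen's inequality moves the integral inside the root, and
`∫ ⟨r, v⟩² dμ(r)` is the quadratic form `vᵀ Ξ(μ) v`, which for a unit vector `v` is at most
the largest eigenvalue of `Ξ(μ)` by the spectral theorem.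
-/

open Matrix
open scoped RealInnerProductSpace

lemma ContinuousOn.integrable_of_measure_compl_eq_zero {X E : Type*} [TopologicalSpace X]
    [T2Space X] [MeasurableSpace X] [OpensMeasurableSpace X] [NormedAddCommGroup E]
    {μ : Measure X} [IsFiniteMeasureOnCompacts μ] {K : Set X} {f : X → E}
    (hf : ContinuousOn f K) (hK : IsCompact K) (hμK : μ Kᶜ = 0) : Integrable f μ := by
  simpa [IntegrableOn, Measure.restrict_eq_self_of_ae_mem (mem_ae_iff.mpr hμK)]
    using hf.integrableOn_compact (μ := μ) hK

lemma integral_sqrt_le_sqrt_integral {α : Type*} [MeasurableSpace α] {μ : Measure α}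
    [IsProbabilityMeasure μ] {f : α → ℝ} (hf₀ : 0 ≤ᵐ[μ] f) (hf : Integrable f μ) :
    ∫ x, √(f x) ∂μ ≤ √(∫ x, f x ∂μ) := by
  by_cases hsf : Integrable (fun x ↦ √(f x)) μ
  · exact strictConcaveOn_sqrt.concaveOn.le_map_integral continuous_sqrt.continuousOn isClosed_Ici
      hf₀ hf hsf
  · -- the Bochner integral of a non-integrable function is `0`
    rw [integral_undef hsf]
    exact sqrt_nonneg _

lemma Matrix.dotProduct_diagonal_mulVec_le_iSup_mul {n : Type*} [Fintype n] [DecidableEq n]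
    (d w : n → ℝ) : w ⬝ᵥ diagonal d *ᵥ w ≤ (⨆ i, d i) * (w ⬝ᵥ w) := by
  simp only [mulVec_diagonal, dotProduct, Finset.mul_sum]
  refine Finset.sum_le_sum fun i _ ↦ ?_
  have := le_ciSup (Set.finite_range d).bddAbove i
  nlinarith [mul_self_nonneg (w i)]

lemma Matrix.IsHermitian.dotProduct_mulVec_le_iSup_eigenvalues_mul {n : Type*} [Fintype n]
    [DecidableEq n] {A : Matrix n n ℝ} (hA : A.IsHermitian) (v : n → ℝ) :
    v ⬝ᵥ A *ᵥ v ≤ (⨆ i, hA.eigenvalues i) * (v ⬝ᵥ v) := by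
  set U : Matrix n n ℝ := (hA.eigenvectorUnitary : Matrix n n ℝ)
  have hvU : v ᵥ* U = star U *ᵥ v := by
    rw [star_eq_conjTranspose, conjTranspose_eq_transpose_of_trivial, mulVec_transpose]
  have hquad : v ⬝ᵥ A *ᵥ v = (star U *ᵥ v) ⬝ᵥ diagonal hA.eigenvalues *ᵥ (star U *ᵥ v) := by
    conv_lhs => rw [hA.spectral_theorem, Unitary.conjStarAlgAut_apply]
    rw [← mulVec_mulVec, ← mulVec_mulVec, dotProduct_mulVec, hvU]
    simp [U]
  have hnorm : (star U *ᵥ v) ⬝ᵥ (star U *ᵥ v) = v ⬝ᵥ v := by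
    nth_rw 1 [← hvU]
    rw [← dotProduct_mulVec, mulVec_mulVec,
      Unitary.mul_star_self_of_mem hA.eigenvectorUnitary.2, one_mulVec]
  rw [hquad, ← hnorm]
  exact dotProduct_diagonal_mulVec_le_iSup_mul _ _

lemma integral_inner_sq_eq_dotProduct_Xi_mulVec {μ : Measure E3}
    (hint : ∀ i j, Integrable (fun r : E3 ↦ r i * r j) μ) (v : E3) :
    ∫ r, ⟪r, v⟫ ^ 2 ∂μ = v ⬝ᵥ Xi μ *ᵥ v := by
  have hexpand (r : E3) : ⟪r, v⟫ ^ 2 = ∑ i, ∑ j, v i * v j * (r i * r j) := by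
    simp only [EuclideanSpace.inner_eq_star_dotProduct, star_trivial, dotProduct, sq,
      Finset.sum_mul_sum]
    exact Finset.sum_congr rfl fun i _ ↦ Finset.sum_congr rfl fun j _ ↦ by ring
  simp only [hexpand, dotProduct, mulVec, Finset.mul_sum]
  rw [integral_finsetSum _ fun i _ ↦ integrable_finsetSum _ fun j _ ↦ (hint i j).const_mul _]
  refine Finset.sum_congr rfl fun i _ ↦ ?_
  rw [integral_finsetSum _ fun j _ ↦ (hint i j).const_mul _]
  refine Finset.sum_congr rfl fun j _ ↦ ?_
  rw [integral_const_mul, Xi, of_apply]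
  ring

theorem g_le_sqrt_XiNorm (μ : Measure E3) [IsProbabilityMeasure μ] (hμ : μ unitSphereᶜ = 0)
    (hXi : (Xi μ).IsHermitian) (C : ℝ) (hC : C ∈ Set.Icc (0 : ℝ) 1) :
    g C μ ≤ Real.sqrt (C ^ 2 + (1 - C ^ 2) * (⨆ i, hXi.eigenvalues i)) := by
  have hC' : 0 ≤ 1 - C ^ 2 := by nlinarith [hC.1, hC.2]
  have hint {f : E3 → ℝ} (hf : Continuous f) : Integrable f μ :=
    hf.continuousOn.integrable_of_measure_compl_eq_zero (isCompact_sphere 0 1) hμ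
  refine Real.iSup_le (fun v ↦ ?_) (sqrt_nonneg _)
  have hv : (v : E3) ⬝ᵥ (v : E3) = 1 := by
    calc (v : E3) ⬝ᵥ (v : E3) = ⟪(v : E3), v⟫ := rfl
      _ = 1 := by rw [real_inner_self_eq_norm_sq, mem_sphere_zero_iff_norm.mp v.2, one_pow]
  calc ∫ r, √(C ^ 2 + (1 - C ^ 2) * ⟪r, (v : E3)⟫ ^ 2) ∂μ
      ≤ √(∫ r, C ^ 2 + (1 - C ^ 2) * ⟪r, (v : E3)⟫ ^ 2 ∂μ) :=
        integral_sqrt_le_sqrt_integral (ae_of_all _ fun r ↦ by positivity) (hint (by fun_prop))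
    _ = √(C ^ 2 + (1 - C ^ 2) * ((v : E3) ⬝ᵥ Xi μ *ᵥ (v : E3))) := by
        rw [integral_add (integrable_const _) ((hint (by fun_prop)).const_mul _), integral_const,
          integral_const_mul, integral_inner_sq_eq_dotProduct_Xi_mulVec
            (fun i j ↦ hint (by fun_prop))]
        simp
    _ ≤ √(C ^ 2 + (1 - C ^ 2) * (⨆ i, hXi.eigenvalues i)) := by
        gcongr
        simpa [hv] using hXi.dotProduct_mulVec_le_iSup_eigenvalues_mul (v : E3)
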